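/- arXiv:1403.7736 — 2 statements merged into one kernel-verified Lean document; each statement's English description precedes it below -/
import Mathlib

section
/- Let g ≥ 3 be an odd integer. The presented group with generators a_1, b_1, …, a_g, b_g and relator set consisting of the genus-g surface relator r_g, the commutator a_1 b_1 a_1^{-1} b_1^{-1}, the generators b_2, …, b_{g−1}, the word b_1 b_g, the words a_i a_{g+1-i} for 1 ≤ i ≤ (g−1)/2, and the generator a_{(g+1)/2}, is isomorphic to the free product of the free group of rank (g−3)/2 with ℤ × ℤ. -/
/-- Generators of the genus-`g` surface group presentation: `Sum.inl i` is `a_{i+1}`,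
`Sum.inr i` is `b_{i+1}` (`0`-based indexing). -/
abbrev SurfGen (g : ℕ) := Fin g ⊕ Fin g

/-- The generator `a_{i+1}` as an element of the free group. -/
def genA (g : ℕ) (i : Fin g) : FreeGroup (SurfGen g) := FreeGroup.of (Sum.inl i)

/-- The generator `b_{i+1}` as an element of the free group. -/
def genB (g : ℕ) (i : Fin g) : FreeGroup (SurfGen g) := FreeGroup.of (Sum.inr i)

/-- The word `c_i = b_i⁻¹ ⋯ b_1⁻¹ (a_1 b_1 a_1⁻¹) ⋯ (a_i b_i a_i⁻¹)` (here `i : ℕ`, `1`-based). -/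
def cword (g i : ℕ) : FreeGroup (SurfGen g) :=
  ((((List.finRange g).take i).reverse.map fun j => (genB g j)⁻¹).prod) *
  ((((List.finRange g).take i).map fun j => genA g j * genB g j * (genA g j)⁻¹).prod)

/-- The genus-`g` surface relator
`r_g = b_g⁻¹ ⋯ b_1⁻¹ (a_1 b_1 a_1⁻¹) ⋯ (a_g b_g a_g⁻¹)`. -/
def surfRel (g : ℕ) : FreeGroup (SurfGen g) := cword g g


/-! The relators kill `b_2, …, b_{g-1}` and `a_{(g+1)/2}` and identify `b_g = b_1⁻¹` and
`a_{g+1-i} = a_i⁻¹`, leaving the commuting pair `a_1, b_1` and the free generators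
`a_2, …, a_{(g-1)/2}`. Conversely, sending these to the generators of `F_{(g-3)/2} ∗ ℤ²`
and the other generators accordingly kills the surface relator, since every `a_i` is then
sent to an element commuting with the image of `b_i`; the two induced maps are mutually
inverse. -/

open Monoid Multiplicative

section IntProd

variable {G : Type*} [Group G]

def intProdLift (a b : G) (h : Commute a b) : Multiplicative (ℤ × ℤ) →* G :=
  MonoidHom.mk' (fun z => a ^ (toAdd z).1 * b ^ (toAdd z).2) fun z w => by
    simp only [toAdd_mul, Prod.fst_add, Prod.snd_add, zpow_add]
    exact (h.zpow_zpow _ _).mul_mul_mul_comm _ _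

@[simp]
lemma intProdLift_ofAdd_one_zero (a b : G) (h : Commute a b) :
    intProdLift a b h (ofAdd (1, 0)) = a := by
  simp [intProdLift]

@[simp]
lemma intProdLift_ofAdd_zero_one (a b : G) (h : Commute a b) :
    intProdLift a b h (ofAdd (0, 1)) = b := by
  simp [intProdLift]

lemma intProd_hom_ext {f f' : Multiplicative (ℤ × ℤ) →* G}
    (h₁ : f (ofAdd (1, 0)) = f' (ofAdd (1, 0))) (h₂ : f (ofAdd (0, 1)) = f' (ofAdd (0, 1))) :
    f = f' := by
  refine MonoidHom.ext fun z => ?_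
  have hz : z = ofAdd (1, 0) ^ (toAdd z).1 * ofAdd (0, 1) ^ (toAdd z).2 := by
    apply toAdd.injective
    ext <;> simp
  rw [hz, map_mul, map_mul, map_zpow, map_zpow, map_zpow, map_zpow, h₁, h₂]

end IntProd

section SurfaceRelator

variable {g : ℕ}

lemma cword_succ (i : ℕ) (h : i < g) :
    cword g (i + 1) = (genB g ⟨i, h⟩)⁻¹ * cword g i *
      (genA g ⟨i, h⟩ * genB g ⟨i, h⟩ * (genA g ⟨i, h⟩)⁻¹) := by
  have hget : (List.finRange g)[i]? = some ⟨i, h⟩ := by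
    simp [List.getElem?_eq_getElem (by simpa using h : i < (List.finRange g).length)]
  simp [cword, List.take_add_one, hget, mul_assoc]

lemma map_cword_eq_one {H : Type*} [Group H] (f : FreeGroup (SurfGen g) →* H)
    (hf : ∀ i, Commute (f (genA g i)) (f (genB g i))) {i : ℕ} (hi : i ≤ g) :
    f (cword g i) = 1 := by
  induction i with
  | zero => simp [cword]
  | succ n ih =>
    rw [cword_succ n hi, map_mul, map_mul, map_mul, map_mul, map_inv, map_inv, ih (by omega),
      (hf _).eq]
    group

end SurfaceRelator

namespace FoldedSurfaceGroup

variable {g : ℕ}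

def rels (g : ℕ) (hg : 3 ≤ g) : Set (FreeGroup (SurfGen g)) :=
  {surfRel g}
    ∪ {genA g ⟨0, Nat.zero_lt_of_lt hg⟩ * genB g ⟨0, Nat.zero_lt_of_lt hg⟩ *
        (genA g ⟨0, Nat.zero_lt_of_lt hg⟩)⁻¹ * (genB g ⟨0, Nat.zero_lt_of_lt hg⟩)⁻¹}
    ∪ Set.range (fun i : Fin (g - 2) => genB g (Fin.castLE (by grind) i.succ))
    ∪ {genB g ⟨0, Nat.zero_lt_of_lt hg⟩ * genB g ⟨g - 1, Nat.sub_one_lt_of_lt hg⟩}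
    ∪ Set.range (fun i : Fin ((g - 1) / 2) =>
        genA g (Fin.castLE (by grind) i) *
          genA g ((Fin.castLE (by grind : (g - 1) / 2 ≤ g) i).rev))
    ∪ {genA g ⟨(g + 1) / 2 - 1, by grind⟩}

abbrev FreeProd (g : ℕ) := Coprod (FreeGroup (Fin ((g - 3) / 2))) (Multiplicative (ℤ × ℤ))

section Relations

variable (hg : 3 ≤ g)

def ofA (i : Fin g) : PresentedGroup (rels g hg) := PresentedGroup.of (Sum.inl i)

def ofB (i : Fin g) : PresentedGroup (rels g hg) := PresentedGroup.of (Sum.inr i)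

lemma commute_ofA_zero_ofB_zero :
    Commute (ofA hg ⟨0, Nat.zero_lt_of_lt hg⟩) (ofB hg ⟨0, Nat.zero_lt_of_lt hg⟩) := by
  have h := PresentedGroup.one_of_mem (rels := rels g hg) (Or.inl (Or.inl (Or.inl (Or.inl
    (Or.inr rfl)))))
  simp only [map_mul, map_inv] at h
  exact commutatorElement_eq_one_iff_commute.mp h

lemma ofB_eq_one {i : Fin g} (h0 : i.val ≠ 0) (hlast : i.val ≠ g - 1) : ofB hg i = 1 := by
  have hi : i = Fin.castLE (by omega) (Fin.succ ⟨i.val - 1, by omega⟩ : Fin (g - 2 + 1)) := by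
    ext; simp; omega
  rw [ofB, hi]
  exact PresentedGroup.one_of_mem (Or.inl (Or.inl (Or.inl (Or.inr ⟨_, rfl⟩))))

lemma ofB_last :
    ofB hg ⟨g - 1, Nat.sub_one_lt_of_lt hg⟩ = (ofB hg ⟨0, Nat.zero_lt_of_lt hg⟩)⁻¹ := by
  have h := PresentedGroup.one_of_mem (rels := rels g hg) (Or.inl (Or.inl (Or.inr rfl)))
  rw [map_mul] at h
  exact (inv_eq_of_mul_eq_one_right h).symm

lemma ofA_rev {i : Fin g} (hi : i.val < (g - 1) / 2) : ofA hg i.rev = (ofA hg i)⁻¹ := by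
  have hi' : i = Fin.castLE (by omega) (⟨i.val, hi⟩ : Fin ((g - 1) / 2)) := rfl
  have h := PresentedGroup.one_of_mem (rels := rels g hg)
    (Or.inl (Or.inr ⟨⟨i.val, hi⟩, rfl⟩))
  rw [map_mul, ← hi'] at h
  exact (inv_eq_of_mul_eq_one_right h).symm

lemma ofA_eq_one {i : Fin g} (hi : 2 * i.val + 1 = g) : ofA hg i = 1 := by
  have hi' : i = ⟨(g + 1) / 2 - 1, by omega⟩ := by ext; simp; omega
  rw [ofA, hi']
  exact PresentedGroup.one_of_mem (Or.inr rfl)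

end Relations

/- `halfImage k` is the image of `a_{k+1}` for `2k + 1 ≤ g`: `a_1 ↦ (1, 0)`,
`a_2, …, a_{(g-1)/2}` go to the free generators and `a_{(g+1)/2} ↦ 1`; `genImage` sends
`a_{g+1-i}` to the inverse of the image of `a_i`, `b_1 ↦ (0, 1)`, `b_g ↦ (0, -1)` and the other
`b_i` to `1`. -/
def halfImage : ℕ → FreeProd g
  | 0 => Coprod.inr (ofAdd (1, 0))
  | j + 1 => if h : j < (g - 3) / 2 then Coprod.inl (FreeGroup.of ⟨j, h⟩) else 1

lemma halfImage_of_le {k : ℕ} (hk : (g - 3) / 2 + 1 ≤ k) : (halfImage k : FreeProd g) = 1 := by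
  obtain ⟨j, rfl⟩ : ∃ j, k = j + 1 := ⟨k - 1, by omega⟩
  exact dif_neg (by omega)

def genImage : SurfGen g → FreeProd g
  | .inl i => if 2 * i.val + 1 ≤ g then halfImage i else (halfImage i.rev)⁻¹
  | .inr i =>
    if i.val = 0 then Coprod.inr (ofAdd (0, 1))
    else if i.val = g - 1 then (Coprod.inr (ofAdd (0, 1)))⁻¹ else 1

lemma genImage_inl_of_le {i : Fin g} (hi : 2 * i.val + 1 ≤ g) :
    genImage (.inl i) = halfImage i :=
  if_pos hi

lemma genImage_inl_of_lt {i : Fin g} (hi : g < 2 * i.val + 1) :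
    genImage (.inl i) = (halfImage i.rev)⁻¹ :=
  if_neg (by omega)

lemma genImage_inl_zero (h : 0 < g) :
    genImage (.inl (⟨0, h⟩ : Fin g)) = Coprod.inr (ofAdd (1, 0)) :=
  genImage_inl_of_le (by simp; omega)

lemma genImage_inl_last (h : 2 ≤ g) :
    genImage (.inl (⟨g - 1, by omega⟩ : Fin g)) = (Coprod.inr (ofAdd (1, 0)))⁻¹ := by
  rw [genImage_inl_of_lt (by simp; omega)]
  simp [Fin.rev, show g - (g - 1 + 1) = 0 by omega, halfImage]

lemma genImage_inr_zero (h : 0 < g) :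
    genImage (.inr (⟨0, h⟩ : Fin g)) = Coprod.inr (ofAdd (0, 1)) :=
  rfl

lemma genImage_inr_last (h : 2 ≤ g) :
    genImage (.inr (⟨g - 1, by omega⟩ : Fin g)) = (Coprod.inr (ofAdd (0, 1)))⁻¹ := by
  simp [genImage, show g - 1 ≠ 0 by omega]

lemma commute_genImage (i : Fin g) : Commute (genImage (.inl i)) (genImage (.inr i)) := by
  have hxy : Commute (Coprod.inr (ofAdd (1, 0)) : FreeProd g) (Coprod.inr (ofAdd (0, 1))) :=
    (Commute.all _ _).map Coprod.inr
  by_cases h0 : i.val = 0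
  · rw [show i = ⟨0, by omega⟩ from Fin.ext h0, genImage_inl_zero, genImage_inr_zero]
    exact hxy
  by_cases hlast : i.val = g - 1
  · rw [show i = ⟨g - 1, by omega⟩ from Fin.ext hlast, genImage_inl_last (by omega),
      genImage_inr_last (g := g) (by omega)]
    exact hxy.inv_inv
  · simp [genImage, h0, hlast]

lemma lift_genImage_eq_one_of_mem (hg : 3 ≤ g) :
    ∀ r ∈ rels g hg, FreeGroup.lift genImage r = 1 := by
  rintro r (((((rfl | rfl) | ⟨i, rfl⟩) | rfl) | ⟨i, rfl⟩) | rfl)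
  · exact map_cword_eq_one _ (fun i => by simpa [genA, genB] using commute_genImage i) le_rfl
  · simp only [genA, genB, map_mul, map_inv, FreeGroup.lift_apply_of, genImage_inl_zero,
      genImage_inr_zero]
    exact ((Commute.all _ _).map Coprod.inr).commutator_eq
  · have hi := i.isLt
    simp only [genB, FreeGroup.lift_apply_of, genImage]
    rw [if_neg (by simp), if_neg (by simp; omega)]
  · simp only [genB, map_mul, FreeGroup.lift_apply_of, genImage_inr_zero,
      genImage_inr_last (g := g) (by omega)]
    exact mul_inv_cancel _
  · have hi := i.isLt
    have hrev : ¬2 * ((Fin.castLE (by omega : (g - 1) / 2 ≤ g) i).rev.val) + 1 ≤ g := by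
      simp; omega
    simp only [genA, map_mul, FreeGroup.lift_apply_of, genImage, hrev, if_false, Fin.rev_rev]
    rw [if_pos (by simp; omega), mul_inv_cancel]
  · simp only [genA, FreeGroup.lift_apply_of, genImage]
    rw [if_pos (by omega), halfImage_of_le (by omega)]

section Isomorphism

variable (hg : 3 ≤ g)

def toFreeProd : PresentedGroup (rels g hg) →* FreeProd g :=
  PresentedGroup.toGroup (lift_genImage_eq_one_of_mem hg)

lemma toFreeProd_ofA (i : Fin g) : toFreeProd hg (ofA hg i) = genImage (.inl i) :=
  PresentedGroup.toGroup.of _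

lemma toFreeProd_ofB (i : Fin g) : toFreeProd hg (ofB hg i) = genImage (.inr i) :=
  PresentedGroup.toGroup.of _

def ofFreeProd : FreeProd g →* PresentedGroup (rels g hg) :=
  Coprod.lift (FreeGroup.lift fun j => ofA hg ⟨j.val + 1, by omega⟩)
    (intProdLift (ofA hg ⟨0, Nat.zero_lt_of_lt hg⟩) (ofB hg ⟨0, Nat.zero_lt_of_lt hg⟩)
      (commute_ofA_zero_ofB_zero hg))

lemma ofFreeProd_halfImage (ho : g % 2 = 1) {k : ℕ} (hk : 2 * k + 1 ≤ g) :
    ofFreeProd hg (halfImage k) = ofA hg ⟨k, by omega⟩ := by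
  rcases k with _ | j
  · simp [halfImage, ofFreeProd]
  by_cases hj : j < (g - 3) / 2
  · simp [halfImage, ofFreeProd, hj]
  · rw [halfImage_of_le (by omega), map_one, ofA_eq_one hg (by simp; omega)]

lemma ofFreeProd_comp_toFreeProd (ho : g % 2 = 1) :
    (ofFreeProd hg).comp (toFreeProd hg) = MonoidHom.id _ := by
  refine PresentedGroup.ext fun s => ?_
  rcases s with i | i
  · change ofFreeProd hg (toFreeProd hg (ofA hg i)) = ofA hg i
    rw [toFreeProd_ofA]
    by_cases hi : 2 * i.val + 1 ≤ g
    · rw [genImage_inl_of_le hi, ofFreeProd_halfImage hg ho hi]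
    · have hrev : i.rev.val < (g - 1) / 2 := by simp; omega
      rw [genImage_inl_of_lt (by omega), map_inv, ofFreeProd_halfImage hg ho (by omega),
        Fin.eta, ← ofA_rev hg hrev, Fin.rev_rev]
  · change ofFreeProd hg (toFreeProd hg (ofB hg i)) = ofB hg i
    rw [toFreeProd_ofB]
    by_cases h0 : i.val = 0
    · rw [show i = ⟨0, Nat.zero_lt_of_lt hg⟩ from Fin.ext h0, genImage_inr_zero]
      simp [ofFreeProd]
    by_cases hlast : i.val = g - 1
    · rw [show i = ⟨g - 1, by omega⟩ from Fin.ext hlast, genImage_inr_last (by omega),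
        ofB_last]
      simp [ofFreeProd]
    · simp only [genImage, h0, hlast, if_false, map_one]
      exact (ofB_eq_one hg h0 hlast).symm

lemma toFreeProd_comp_ofFreeProd :
    (toFreeProd hg).comp (ofFreeProd hg) = MonoidHom.id _ := by
  refine Coprod.hom_ext (FreeGroup.ext_hom _ _ fun j => ?_) (intProd_hom_ext ?_ ?_)
  · have hj := j.isLt
    simp only [MonoidHom.comp_apply, ofFreeProd, Coprod.lift_apply_inl, FreeGroup.lift_apply_of,
      toFreeProd_ofA]
    rw [genImage_inl_of_le (by simp; omega)]
    simp [halfImage, hj]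
  · simp [ofFreeProd, toFreeProd_ofA, genImage_inl_zero]
  · simp [ofFreeProd, toFreeProd_ofB, genImage_inr_zero]

end Isomorphism

end FoldedSurfaceGroup

/-- for odd `g ≥ 3`, the presented group
`⟨a_1, b_1, …, a_g, b_g ∣ r_g, a_1 b_1 a_1⁻¹ b_1⁻¹, b_2, …, b_{g-1}, b_1 b_g,
a_i a_{g+1-i} (1 ≤ i ≤ (g-1)/2), a_{(g+1)/2}⟩` is isomorphic to the free product of the
free group of rank `(g-3)/2` with `ℤ × ℤ`. -/
theorem stmt3 (g : ℕ) (hg : 3 ≤ g) (hodd : Odd g) :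
    Nonempty (PresentedGroup
      (({surfRel g}
        ∪ {genA g ⟨0, by omega⟩ * genB g ⟨0, by omega⟩ *
            (genA g ⟨0, by omega⟩)⁻¹ * (genB g ⟨0, by omega⟩)⁻¹}
        ∪ Set.range (fun i : Fin (g - 2) => genB g (Fin.castLE (by omega) i.succ))
        ∪ {genB g ⟨0, by omega⟩ * genB g ⟨g - 1, by omega⟩}
        ∪ Set.range (fun i : Fin ((g - 1) / 2) =>
            genA g (Fin.castLE (by omega) i) *
              genA g ((Fin.castLE (by omega : (g - 1) / 2 ≤ g) i).rev))
        ∪ {genA g ⟨(g + 1) / 2 - 1, by omega⟩}) : Set (FreeGroup (SurfGen g)))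
      ≃* Monoid.Coprod (FreeGroup (Fin ((g - 3) / 2))) (Multiplicative (ℤ × ℤ))) :=
  ⟨MonoidHom.toMulEquiv (FoldedSurfaceGroup.toFreeProd hg) (FoldedSurfaceGroup.ofFreeProd hg)
    (FoldedSurfaceGroup.ofFreeProd_comp_toFreeProd hg (Nat.odd_iff.mp hodd))
    (FoldedSurfaceGroup.toFreeProd_comp_ofFreeProd hg)⟩
end

section
/- Let g ≥ 2. The presented group with generators σ_1, …, σ_{2g+1} and relators σ_i σ_j σ_i^{−1} σ_j^{−1} for 1 ≤ i < j − 1 ≤ 2g, σ_i σ_{i+1} σ_i σ_{i+1}^{−1} σ_i^{−1} σ_{i+1}^{−1} for 1 ≤ i ≤ 2g, (σ_1 ⋯ σ_{2g+1})^{2g+2}, ((σ_1 ⋯ σ_{2g+1})(σ_{2g+1} ⋯ σ_1))^2, and the commutator [(σ_1 ⋯ σ_{2g+1})(σ_{2g+1} ⋯ σ_1), σ_1] (the Birman–Hilden presentation of the genus-g hyperelliptic mapping class group) is isomorphic to the presented group with generators x, y and relators x y^k x y^{−k} x^{−1} y^k x^{−1} y^{−k} for 2 ≤ k ≤ 2g,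 x y x y^{−1} x y x^{−1} y^{−1} x^{−1} y x^{−1} y^{−1}, (xy)^{2g+1} y^{−2g−2}, y^{2g+2}, (y^{−1} x)^{4g+2}, and (y^{−1} x)^{2g+1} (y x^{−1})^{2g+1}, via an isomorphism sending σ_i to y^{i−1} x y^{1−i} for each 1 ≤ i ≤ 2g + 1. -/
/-- The generator `σ_{i+1}` (`0`-based indexing) as an element of the free group on `Fin N`. -/
def S (N : ℕ) (i : Fin N) : FreeGroup (Fin N) := FreeGroup.of i

/-- The word `σ_1 σ_2 ⋯ σ_N`. -/
def deltaWord (N : ℕ) : FreeGroup (Fin N) := ((List.finRange N).map (S N)).prod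

/-- The word `σ_N ⋯ σ_2 σ_1`. -/
def deltaRevWord (N : ℕ) : FreeGroup (Fin N) :=
  ((List.finRange N).reverse.map (S N)).prod

/-- The Birman–Hilden relators of the genus-`g` hyperelliptic mapping class group, on the
generators `σ_1, …, σ_{2g+1}`. -/
def hypRels (g : ℕ) : Set (FreeGroup (Fin (2 * g + 1))) :=
  {w | (∃ i j : Fin (2 * g + 1), (i : ℕ) + 1 < (j : ℕ) ∧
          w = S _ i * S _ j * (S _ i)⁻¹ * (S _ j)⁻¹)
     ∨ (∃ i j : Fin (2 * g + 1), (j : ℕ) = (i : ℕ) + 1 ∧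
          w = S _ i * S _ j * S _ i * (S _ j)⁻¹ * (S _ i)⁻¹ * (S _ j)⁻¹)
     ∨ w = deltaWord (2 * g + 1) ^ (2 * g + 2)
     ∨ w = (deltaWord (2 * g + 1) * deltaRevWord (2 * g + 1)) ^ 2
     ∨ w = deltaWord (2 * g + 1) * deltaRevWord (2 * g + 1) * S _ ⟨0, by omega⟩ *
            (deltaWord (2 * g + 1) * deltaRevWord (2 * g + 1))⁻¹ * (S _ ⟨0, by omega⟩)⁻¹}

/-- `x` in the two-generator presentation. -/
def X : FreeGroup Bool := FreeGroup.of true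

/-- `y` in the two-generator presentation. -/
def Y : FreeGroup Bool := FreeGroup.of false

/-- The two-generator relators of the genus-`g` hyperelliptic mapping class group. -/
def xyHypRels (g : ℕ) : Set (FreeGroup Bool) :=
  {w | (∃ k : ℕ, 2 ≤ k ∧ k ≤ 2 * g ∧
          w = X * Y ^ k * X * (Y ^ k)⁻¹ * X⁻¹ * Y ^ k * X⁻¹ * (Y ^ k)⁻¹)
     ∨ w = X * Y * X * Y⁻¹ * X * Y * X⁻¹ * Y⁻¹ * X⁻¹ * Y * X⁻¹ * Y⁻¹
     ∨ w = (X * Y) ^ (2 * g + 1) * (Y ^ (2 * g + 2))⁻¹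
     ∨ w = Y ^ (2 * g + 2)
     ∨ w = (Y⁻¹ * X) ^ (4 * g + 2)
     ∨ w = (Y⁻¹ * X) ^ (2 * g + 1) * (Y * X⁻¹) ^ (2 * g + 1)}


/-!
Send `σ_i` to `y^{i-1} x y^{1-i}` and, backwards, `x` to `σ_1` and `y` to
`δ = σ_1 σ_2 ⋯ σ_{2g+1}`. The braid relations alone make `δ` conjugate `σ_i` to `σ_{i+1}`, so
`σ_i = δ^{i-1} σ_1 δ^{1-i}`, the two maps are mutually inverse on generators, and the words
`(σ_1 δ)^{2g+1}` and `(δ⁻¹ σ_1)^{2g+1}` become `δ^{2g+2}` and the hyperelliptic involution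
`δ σ_{2g+1} ⋯ σ_1`. In the other direction the conjugates `y^{i-1} x y^{1-i}` telescope:
their product over `i ≤ 2g+1` is `(xy)^{2g+1} y^{-2g-1} = y`, and their product in reverse order
is `y^{2g+1} (y⁻¹ x)^{2g+1}`.
-/

section BraidFamily

variable {G : Type*} [Group G]

def ascProd (σ : ℕ → G) (m : ℕ) : G := ((List.range m).map σ).prod

def descProd (σ : ℕ → G) (m : ℕ) : G := ((List.range m).reverse.map σ).prod

lemma ascProd_zero (σ : ℕ → G) : ascProd σ 0 = 1 := rfl

lemma descProd_zero (σ : ℕ → G) : descProd σ 0 = 1 := rfl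

lemma ascProd_succ (σ : ℕ → G) (m : ℕ) : ascProd σ (m + 1) = ascProd σ m * σ m := by
  simp [ascProd, List.range_succ]

lemma descProd_succ (σ : ℕ → G) (m : ℕ) : descProd σ (m + 1) = σ m * descProd σ m := by
  simp [descProd, List.range_succ]

lemma ascProd_congr {σ τ : ℕ → G} {m : ℕ} (h : ∀ i < m, σ i = τ i) :
    ascProd σ m = ascProd τ m :=
  congrArg List.prod <| List.map_congr_left fun i hi => h i (List.mem_range.mp hi)

lemma map_ascProd {H : Type*} [Group H] (F : G →* H) (σ : ℕ → G) (m : ℕ) :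
    F (ascProd σ m) = ascProd (F ∘ σ) m := by
  rw [ascProd, map_list_prod, List.map_map, ascProd]

lemma commute_ascProd_left {σ : ℕ → G} {m : ℕ} {a : G} (h : ∀ j < m, Commute (σ j) a) :
    Commute (ascProd σ m) a :=
  Commute.list_prod_left _ _ <| by simpa [List.mem_map] using h

structure IsBraidFamily (σ : ℕ → G) (n : ℕ) : Prop where
  commute : ∀ i j, i + 1 < j → j < n → Commute (σ i) (σ j)
  braid : ∀ i, i + 1 < n → σ i * σ (i + 1) * σ i = σ (i + 1) * σ i * σ (i + 1)

namespace IsBraidFamily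

variable {σ : ℕ → G} {n : ℕ} (hσ : IsBraidFamily σ n)
include hσ

lemma ascProd_mul_of_le {i m : ℕ} (him : i + 2 ≤ m) (hmn : m ≤ n) :
    ascProd σ m * σ i = σ (i + 1) * ascProd σ m := by
  induction m, him using Nat.le_induction with
  | base =>
    have hcomm : Commute (ascProd σ i) (σ (i + 1)) :=
      commute_ascProd_left fun j hj => hσ.commute j (i + 1) (by omega) (by omega)
    simp only [ascProd_succ, mul_assoc, hσ.braid i (by omega)]
    simp only [← mul_assoc, hcomm.eq]
  | succ m hm ih =>
    rw [ascProd_succ, mul_assoc, ← (hσ.commute i m (by omega) (by omega)).eq, ← mul_assoc,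
      ih (by omega), mul_assoc]

lemma ascProd_mul {i : ℕ} (hi : i + 1 < n) :
    ascProd σ n * σ i = σ (i + 1) * ascProd σ n :=
  hσ.ascProd_mul_of_le (by omega) le_rfl

lemma ascProd_pow_mul {i k : ℕ} (hik : i + k < n) :
    ascProd σ n ^ k * σ i = σ (i + k) * ascProd σ n ^ k := by
  induction k generalizing i with
  | zero => simp
  | succ k ih =>
    rw [pow_succ, mul_assoc, hσ.ascProd_mul (by omega), ← mul_assoc, ih (by omega), mul_assoc,
      ← add_assoc, add_right_comm]

lemma mul_ascProd_pow {m : ℕ} (hm : m ≤ n) :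
    (σ 0 * ascProd σ n) ^ m = ascProd σ m * ascProd σ n ^ m := by
  induction m with
  | zero => simp [ascProd_zero]
  | succ m ih =>
    have hconj := hσ.ascProd_pow_mul (i := 0) (k := m) (by omega)
    rw [zero_add] at hconj
    rw [pow_succ, ih (by omega), ascProd_succ, pow_succ]
    simp only [mul_assoc]
    rw [← mul_assoc (ascProd σ n ^ m), hconj, mul_assoc]

lemma inv_mul_pow {m : ℕ} (hm : m ≤ n) :
    ((ascProd σ n)⁻¹ * σ 0) ^ m = (ascProd σ n ^ m)⁻¹ * descProd σ m := by
  induction m with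
  | zero => simp [descProd_zero]
  | succ m ih =>
    have hconj := hσ.ascProd_pow_mul (i := 0) (k := m) (by omega)
    rw [zero_add, ← eq_inv_mul_iff_mul_eq, ← mul_assoc] at hconj
    rw [pow_succ', ih (by omega), descProd_succ, pow_succ, mul_inv_rev, hconj]
    group

end IsBraidFamily

end BraidFamily

section ConjPow

variable {G : Type*} [Group G]

def conjPow (x y : G) (i : ℕ) : G := y ^ i * x * (y ^ i)⁻¹

lemma conjPow_zero (x y : G) : conjPow x y 0 = x := by simp [conjPow]

lemma map_conjPow {H : Type*} [Group H] (F : G →* H) (x y : G) (i : ℕ) :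
    F (conjPow x y i) = conjPow (F x) (F y) i := by
  simp only [conjPow, map_mul, map_inv, map_pow]

lemma conjPow_eq_conj (x y : G) (i : ℕ) : conjPow x y i = MulAut.conj (y ^ i) x := rfl

lemma conjPow_add (x y : G) (i k : ℕ) :
    conjPow x y (i + k) = MulAut.conj (y ^ i) (conjPow x y k) := by
  simp only [conjPow, MulAut.conj_apply, pow_add]
  group

lemma ascProd_conjPow (x y : G) (m : ℕ) : ascProd (conjPow x y) m = (x * y) ^ m * (y ^ m)⁻¹ := by
  induction m with
  | zero => simp [ascProd_zero]
  | succ m ih =>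
    rw [ascProd_succ, ih, conjPow, pow_succ, pow_succ]
    group

lemma descProd_conjPow (x y : G) (m : ℕ) : descProd (conjPow x y) m = y ^ m * (y⁻¹ * x) ^ m := by
  induction m with
  | zero => simp [descProd_zero]
  | succ m ih =>
    rw [descProd_succ, ih, conjPow, pow_succ y, pow_succ' (y⁻¹ * x)]
    simp [mul_assoc]

lemma isBraidFamily_conjPow {x y : G} {n : ℕ}
    (hcomm : ∀ k, 2 ≤ k → k < n → Commute x (conjPow x y k))
    (hbraid : x * conjPow x y 1 * x = conjPow x y 1 * x * conjPow x y 1) :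
    IsBraidFamily (conjPow x y) n where
  commute i j hij hj := by
    obtain ⟨k, rfl⟩ : ∃ k, j = i + k := ⟨j - i, by omega⟩
    have h := (hcomm k (by omega) (by omega)).map (MulAut.conj (y ^ i)).toMonoidHom
    rwa [MulEquiv.coe_toMonoidHom, ← conjPow_eq_conj, ← conjPow_add] at h
  braid i _ := by
    have h := congrArg (MulAut.conj (y ^ i)) hbraid
    rwa [map_mul, map_mul, map_mul, map_mul, ← conjPow_eq_conj, ← conjPow_add] at h

end ConjPow

section Relators

variable {G : Type*} [Group G]

lemma braid_relator_eq_one_iff {a b : G} :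
    a * b * a * b⁻¹ * a⁻¹ * b⁻¹ = 1 ↔ a * b * a = b * a * b := by
  rw [show a * b * a * b⁻¹ * a⁻¹ * b⁻¹ = a * b * a * (b * a * b)⁻¹ by group, mul_inv_eq_one]

lemma map_deltaWord {n : ℕ} (F : FreeGroup (Fin n) →* G) {σ : ℕ → G}
    (hσ : ∀ i, F (S n i) = σ i) : F (deltaWord n) = ascProd σ n := by
  rw [deltaWord, map_list_prod, List.map_map, ascProd, ← List.map_coe_finRange_eq_range,
    List.map_map]
  exact congrArg List.prod (List.map_congr_left fun i _ => hσ i)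

lemma map_deltaRevWord {n : ℕ} (F : FreeGroup (Fin n) →* G) {σ : ℕ → G}
    (hσ : ∀ i, F (S n i) = σ i) : F (deltaRevWord n) = descProd σ n := by
  rw [deltaRevWord, map_list_prod, List.map_map, descProd, ← List.map_coe_finRange_eq_range,
    ← List.map_reverse, List.map_map]
  exact congrArg List.prod (List.map_congr_left fun i _ => hσ i)

structure SatisfiesHypRels (g : ℕ) (σ : ℕ → G) : Prop where
  isBraidFamily : IsBraidFamily σ (2 * g + 1)
  ascProd_pow : ascProd σ (2 * g + 1) ^ (2 * g + 2) = 1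
  involution_sq : (ascProd σ (2 * g + 1) * descProd σ (2 * g + 1)) ^ 2 = 1
  commute_involution : Commute (ascProd σ (2 * g + 1) * descProd σ (2 * g + 1)) (σ 0)

lemma map_hypRels_eq_one_iff {g : ℕ} (F : FreeGroup (Fin (2 * g + 1)) →* G) {σ : ℕ → G}
    (hσ : ∀ i, F (S _ i) = σ i) : (∀ r ∈ hypRels g, F r = 1) ↔ SatisfiesHypRels g σ := by
  constructor
  · intro h
    refine ⟨⟨fun i j hij hj => ?_, fun i hi => ?_⟩, ?_, ?_, ?_⟩
    · have := h _ (Or.inl ⟨⟨i, by omega⟩, ⟨j, hj⟩, hij, rfl⟩)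
      simp only [map_mul, map_inv, hσ] at this
      exact commutatorElement_eq_one_iff_commute.mp this
    · have := h _ (Or.inr (Or.inl ⟨⟨i, by omega⟩, ⟨i + 1, hi⟩, rfl, rfl⟩))
      simp only [map_mul, map_inv, hσ] at this
      exact braid_relator_eq_one_iff.mp this
    · simpa only [map_pow, map_deltaWord F hσ] using h _ (Or.inr (Or.inr (Or.inl rfl)))
    · simpa only [map_pow, map_mul, map_deltaWord F hσ, map_deltaRevWord F hσ] using
        h _ (Or.inr (Or.inr (Or.inr (Or.inl rfl))))
    · have := h _ (Or.inr (Or.inr (Or.inr (Or.inr rfl))))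
      simp only [map_mul, map_inv, map_deltaWord F hσ, map_deltaRevWord F hσ, hσ] at this
      exact commutatorElement_eq_one_iff_commute.mp this
  · rintro ⟨hbr, hpow, hsq, hcomm⟩ r (⟨i, j, hij, rfl⟩ | ⟨i, j, hij, rfl⟩ | rfl | rfl | rfl)
    · simp only [map_mul, map_inv, hσ]
      exact commutatorElement_eq_one_iff_commute.mpr (hbr.commute i j hij j.isLt)
    · simp only [map_mul, map_inv, hσ, hij]
      exact braid_relator_eq_one_iff.mpr (hbr.braid i (hij ▸ j.isLt))
    · rwa [map_pow, map_deltaWord F hσ]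
    · rwa [map_pow, map_mul, map_deltaWord F hσ, map_deltaRevWord F hσ]
    · simp only [map_mul, map_inv, map_deltaWord F hσ, map_deltaRevWord F hσ, hσ]
      exact commutatorElement_eq_one_iff_commute.mpr hcomm

end Relators

section XYRelators

variable {G : Type*} [Group G]

structure SatisfiesXYHypRels (g : ℕ) (x y : G) : Prop where
  commute_conjPow : ∀ k, 2 ≤ k → k ≤ 2 * g → Commute x (conjPow x y k)
  braid : x * conjPow x y 1 * x = conjPow x y 1 * x * conjPow x y 1
  mul_pow : (x * y) ^ (2 * g + 1) = y ^ (2 * g + 2)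
  pow : y ^ (2 * g + 2) = 1
  inv_mul_pow : (y⁻¹ * x) ^ (4 * g + 2) = 1
  inv_mul_pow_mul : (y⁻¹ * x) ^ (2 * g + 1) * (y * x⁻¹) ^ (2 * g + 1) = 1

lemma map_xyHypRels_eq_one_iff {g : ℕ} (F : FreeGroup Bool →* G) :
    (∀ r ∈ xyHypRels g, F r = 1) ↔ SatisfiesXYHypRels g (F X) (F Y) := by
  have hcomm_word (x y : G) (k : ℕ) : x * y ^ k * x * (y ^ k)⁻¹ * x⁻¹ * y ^ k * x⁻¹ * (y ^ k)⁻¹ =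
      x * conjPow x y k * x⁻¹ * (conjPow x y k)⁻¹ := by
    simp only [conjPow]
    group
  have hbraid_word (x y : G) : x * y * x * y⁻¹ * x * y * x⁻¹ * y⁻¹ * x⁻¹ * y * x⁻¹ * y⁻¹ =
      x * conjPow x y 1 * x * (conjPow x y 1)⁻¹ * x⁻¹ * (conjPow x y 1)⁻¹ := by
    simp only [conjPow, pow_one]
    group
  constructor
  · intro h
    refine ⟨fun k hk2 hk => ?_, ?_, ?_, ?_, ?_, ?_⟩
    · have := h _ (Or.inl ⟨k, hk2, hk, rfl⟩)
      simp only [map_mul, map_inv, map_pow, hcomm_word] at this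
      exact commutatorElement_eq_one_iff_commute.mp this
    · have := h _ (Or.inr (Or.inl rfl))
      simp only [map_mul, map_inv, hbraid_word] at this
      exact braid_relator_eq_one_iff.mp this
    · have := h _ (Or.inr (Or.inr (Or.inl rfl)))
      simp only [map_mul, map_inv, map_pow] at this
      exact mul_inv_eq_one.mp this
    · simpa only [map_pow] using h _ (Or.inr (Or.inr (Or.inr (Or.inl rfl))))
    · simpa only [map_pow, map_mul, map_inv] using
        h _ (Or.inr (Or.inr (Or.inr (Or.inr (Or.inl rfl)))))
    · simpa only [map_pow, map_mul, map_inv] using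
        h _ (Or.inr (Or.inr (Or.inr (Or.inr (Or.inr rfl)))))
  · rintro ⟨hc, hb, hxy, hy, h5, h6⟩ r (⟨k, hk2, hk, rfl⟩ | rfl | rfl | rfl | rfl | rfl)
    · simp only [map_mul, map_inv, map_pow, hcomm_word]
      exact commutatorElement_eq_one_iff_commute.mpr (hc k hk2 hk)
    · simp only [map_mul, map_inv, hbraid_word]
      exact braid_relator_eq_one_iff.mpr hb
    · simp only [map_mul, map_inv, map_pow]
      exact mul_inv_eq_one.mpr hxy
    · rwa [map_pow]
    · simpa only [map_pow, map_mul, map_inv] using h5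
    · simpa only [map_pow, map_mul, map_inv] using h6

end XYRelators

section Correspondence

variable {G : Type*} [Group G]

lemma IsBraidFamily.conjPow_ascProd {σ : ℕ → G} {n : ℕ} (hσ : IsBraidFamily σ n) {k : ℕ}
    (hk : k < n) : conjPow (σ 0) (ascProd σ n) k = σ k := by
  rw [conjPow, hσ.ascProd_pow_mul (by omega), zero_add, mul_inv_cancel_right]

lemma SatisfiesHypRels.satisfiesXYHypRels {g : ℕ} {σ : ℕ → G} (h : SatisfiesHypRels g σ)
    (hg : 1 ≤ g) : SatisfiesXYHypRels g (σ 0) (ascProd σ (2 * g + 1)) := by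
  set Δ := ascProd σ (2 * g + 1)
  set ι := Δ * descProd σ (2 * g + 1)
  have hσ := h.isBraidFamily
  have hconj (k : ℕ) (hk : k < 2 * g + 1) : conjPow (σ 0) Δ k = σ k := hσ.conjPow_ascProd hk
  have hΔ : (Δ ^ (2 * g + 1))⁻¹ = Δ :=
    inv_eq_of_mul_eq_one_right (by rw [← pow_succ, h.ascProd_pow])
  have hι : (Δ⁻¹ * σ 0) ^ (2 * g + 1) = ι := by rw [hσ.inv_mul_pow le_rfl, hΔ]
  refine ⟨fun k hk2 hk => ?_, ?_, ?_, h.ascProd_pow, ?_, ?_⟩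
  · rw [hconj k (by omega)]
    exact hσ.commute 0 k (by omega) (by omega)
  · rw [hconj 1 (by omega)]
    exact hσ.braid 0 (by omega)
  · rw [hσ.mul_ascProd_pow le_rfl, ← pow_succ']
  · rw [show 4 * g + 2 = (2 * g + 1) * 2 by ring, pow_mul, hι, h.involution_sq]
  · have : Δ * (σ 0)⁻¹ = σ 0 * (Δ⁻¹ * σ 0)⁻¹ * (σ 0)⁻¹ := by group
    have hcomm : Commute ι (σ 0) := h.commute_involution
    rw [this, conj_pow, inv_pow, hι, ← hcomm.inv_left.eq, mul_inv_cancel_right, mul_inv_cancel]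

lemma SatisfiesXYHypRels.ascProd_conjPow_eq {g : ℕ} {x y : G} (h : SatisfiesXYHypRels g x y) :
    ascProd (conjPow x y) (2 * g + 1) = y := by
  have hy : (y ^ (2 * g + 1))⁻¹ = y := inv_eq_of_mul_eq_one_right (by rw [← pow_succ, h.pow])
  rw [ascProd_conjPow, h.mul_pow, hy, h.pow, one_mul]

lemma SatisfiesXYHypRels.satisfiesHypRels {g : ℕ} {x y : G} (h : SatisfiesXYHypRels g x y) :
    SatisfiesHypRels g (conjPow x y) := by
  have hasc := h.ascProd_conjPow_eq
  have hι : ascProd (conjPow x y) (2 * g + 1) * descProd (conjPow x y) (2 * g + 1) =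
      (y⁻¹ * x) ^ (2 * g + 1) := by
    rw [hasc, descProd_conjPow, ← mul_assoc, ← pow_succ', h.pow, one_mul]
  refine ⟨isBraidFamily_conjPow (fun k hk2 hk => h.commute_conjPow k hk2 (by omega)) h.braid,
    ?_, ?_, ?_⟩
  · rw [hasc, h.pow]
  · rw [hι, ← pow_mul, show (2 * g + 1) * 2 = 4 * g + 2 by ring, h.inv_mul_pow]
  · rw [hι, conjPow_zero]
    have hT : (y⁻¹ * x) ^ (2 * g + 1) = ((y * x⁻¹) ^ (2 * g + 1))⁻¹ :=
      eq_inv_of_mul_eq_one_left h.inv_mul_pow_mul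
    have hconj : x * (y⁻¹ * x) ^ (2 * g + 1) * x⁻¹ = (y⁻¹ * x) ^ (2 * g + 1) := by
      rw [← conj_pow, show x * (y⁻¹ * x) * x⁻¹ = (y * x⁻¹)⁻¹ by group, inv_pow, ← hT]
    exact (mul_inv_eq_iff_eq_mul.mp hconj).symm

end Correspondence

section PresentedGroups

open PresentedGroup

variable (g : ℕ)

def hypGen (i : ℕ) : PresentedGroup (hypRels g) := if h : i < 2 * g + 1 then of ⟨i, h⟩ else 1

lemma mk_S (i : Fin (2 * g + 1)) : mk (hypRels g) (S _ i) = hypGen g i := by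
  rw [hypGen, dif_pos i.isLt]
  rfl

lemma satisfiesHypRels_hypGen : SatisfiesHypRels g (hypGen g) :=
  (map_hypRels_eq_one_iff (mk _) (mk_S g)).mp fun _ hr => one_of_mem hr

lemma satisfiesXYHypRels_of :
    SatisfiesXYHypRels g (of true : PresentedGroup (xyHypRels g)) (of false) :=
  (map_xyHypRels_eq_one_iff (mk _)).mp fun _ hr => one_of_mem hr

def hypToXY : PresentedGroup (hypRels g) →* PresentedGroup (xyHypRels g) :=
  toGroup (f := fun i : Fin (2 * g + 1) => conjPow (of true) (of false) (i : ℕ)) <|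
    (map_hypRels_eq_one_iff _ fun _ => FreeGroup.lift_apply_of).mpr
      (satisfiesXYHypRels_of g).satisfiesHypRels

def xyToHyp {g : ℕ} (hg : 1 ≤ g) : PresentedGroup (xyHypRels g) →* PresentedGroup (hypRels g) :=
  toGroup (f := fun b => cond b (hypGen g 0) (ascProd (hypGen g) (2 * g + 1))) <|
    (map_xyHypRels_eq_one_iff _).mpr <| by
      simpa only [X, Y, FreeGroup.lift_apply_of, cond_true, cond_false] using
        (satisfiesHypRels_hypGen g).satisfiesXYHypRels hg

lemma hypToXY_of (i : Fin (2 * g + 1)) :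
    hypToXY g (of i) = conjPow (of true) (of false) i :=
  toGroup.of _

lemma hypToXY_hypGen {i : ℕ} (hi : i < 2 * g + 1) :
    hypToXY g (hypGen g i) = conjPow (of true) (of false) i := by
  rw [hypGen, dif_pos hi, hypToXY_of]

lemma xyToHyp_comp_hypToXY {g : ℕ} (hg : 1 ≤ g) :
    (xyToHyp hg).comp (hypToXY g) = MonoidHom.id _ := by
  refine PresentedGroup.ext fun i => ?_
  rw [MonoidHom.comp_apply, hypToXY_of, map_conjPow, xyToHyp, toGroup.of, toGroup.of, cond_true,
    cond_false, (satisfiesHypRels_hypGen g).isBraidFamily.conjPow_ascProd i.isLt, hypGen,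
    dif_pos i.isLt, MonoidHom.id_apply]

lemma hypToXY_comp_xyToHyp {g : ℕ} (hg : 1 ≤ g) :
    (hypToXY g).comp (xyToHyp hg) = MonoidHom.id _ := by
  refine PresentedGroup.ext fun b => ?_
  rw [MonoidHom.comp_apply, xyToHyp, toGroup.of]
  cases b
  · rw [cond_false, map_ascProd,
      ascProd_congr (σ := hypToXY g ∘ hypGen g) fun i hi => hypToXY_hypGen g hi,
      (satisfiesXYHypRels_of g).ascProd_conjPow_eq]
    rfl
  · rw [cond_true, hypToXY_hypGen g (by omega), conjPow_zero]
    rfl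

end PresentedGroups

/-- for `g ≥ 2`, the Birman–Hilden presentation of the genus-`g`
hyperelliptic mapping class group on the generators `σ_1, …, σ_{2g+1}` is isomorphic to the
two-generator presented group, via an isomorphism sending `σ_i` to `y^{i-1} x y^{1-i}` for
each `1 ≤ i ≤ 2g+1`. -/
theorem stmt10 (g : ℕ) (hg : 2 ≤ g) :
    ∃ e : PresentedGroup (hypRels g) ≃* PresentedGroup (xyHypRels g),
      ∀ i : Fin (2 * g + 1),
        e (PresentedGroup.of i)
          = (PresentedGroup.of false : PresentedGroup (xyHypRels g)) ^ (i : ℕ) *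
              PresentedGroup.of true *
              ((PresentedGroup.of false : PresentedGroup (xyHypRels g)) ^ (i : ℕ))⁻¹ := by
  have hg' : 1 ≤ g := by omega
  exact ⟨MonoidHom.toMulEquiv _ _ (xyToHyp_comp_hypToXY hg') (hypToXY_comp_xyToHyp hg'),
    hypToXY_of g⟩
end
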